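/- arXiv:1205.2572 — 7 statements merged into one kernel-verified Lean document; each statement's English description precedes it below -/
import Mathlib

section
/- Let G be a finite elementary abelian 2-group, i.e. G ≅ (Z/2)^k with k ≥ 2, and let I = G (the set consisting of 0 together with all 2^k − 1 involutions). Then for every r with 0 ≤ r ≤ 2^k and r ∉ {2, 2^k − 2}, there exists a subset R ⊆ I with |R| = r and ∑_{i∈R} i = 0. -/
/-!
If `#S ≥ 2` and `2 * #S < |G|`, pick `x ≠ 0` in `S` and `y ∉ S ∪ (x + S)`: replacing `x` by the
two new elements `y` and `x + y` enlarges `S` by one without changing its sum. Starting from a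
triple `{a, b, a + b}`, this gives zero-sum sets of every size `3 ≤ r ≤ |G| / 2`. The elements of
`G` sum to `0` (as in the field with `|G|` elements, to which `G` is additively isomorphic), so
complements of zero-sum sets are zero-sum, which covers the sizes `|G| / 2 ≤ r ≤ |G|`.
-/

open Finset

theorem exists_card_eq_succ_sum_eq {G : Type*} [AddCommGroup G] [Fintype G] [DecidableEq G]
    (h2 : ∀ x : G, x + x = 0) {S : Finset G} (hS : 2 ≤ #S) (hG : 2 * #S < Fintype.card G) :
    ∃ T : Finset G, #T = #S + 1 ∧ ∑ x ∈ T, x = ∑ x ∈ S, x := by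
  obtain ⟨x, hxS, hx⟩ := S.exists_mem_ne hS 0
  have hcard : #(S ∪ S.image (x + ·)) < #(univ : Finset G) := by
    rw [card_univ]
    linarith [card_union_le S (S.image (x + ·)), card_image_le (s := S) (f := (x + ·))]
  obtain ⟨y, -, hy⟩ := exists_mem_notMem_of_card_lt_card hcard
  have hyS : y ∉ S := fun h => hy (mem_union_left _ h)
  have hxyS : x + y ∉ S := fun h =>
    hy (mem_union_right _ (mem_image.2 ⟨x + y, h, by rw [← add_assoc, h2, zero_add]⟩))
  have hy' : y ∉ insert (x + y) (S.erase x) := by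
    simp only [mem_insert, mem_erase, not_or, not_and]
    exact ⟨fun h => hx (by simpa using h.symm), fun _ => hyS⟩
  have hxy' : x + y ∉ S.erase x := fun h => hxyS (mem_of_mem_erase h)
  refine ⟨insert y (insert (x + y) (S.erase x)), ?_, ?_⟩
  · rw [card_insert_of_notMem hy', card_insert_of_notMem hxy', card_erase_of_mem hxS]
    omega
  · rw [sum_insert hy', sum_insert hxy', ← add_sum_erase S _ hxS]
    calc _ = (y + y) + (x + ∑ z ∈ S.erase x, z) := by abel
      _ = _ := by rw [h2, zero_add]

theorem exists_card_eq_three_sum_eq_zero {G : Type*} [AddCommGroup G] [Fintype G] [DecidableEq G]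
    (h2 : ∀ x : G, x + x = 0) (hG : 3 ≤ Fintype.card G) :
    ∃ R : Finset G, #R = 3 ∧ ∑ x ∈ R, x = 0 := by
  obtain ⟨a, -, ha⟩ := (univ : Finset G).exists_mem_ne (by rw [card_univ]; omega) 0
  obtain ⟨b, -, hb⟩ := exists_mem_notMem_of_card_lt_card (t := univ) (s := {0, a}) <| by
    rw [card_univ]; exact card_le_two.trans_lt (by omega)
  simp only [mem_insert, mem_singleton, not_or] at hb
  have ha' : a ∉ ({b, a + b} : Finset G) := by
    simp only [mem_insert, mem_singleton, not_or]
    exact ⟨Ne.symm hb.2, fun h => hb.1 (by simpa using h)⟩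
  have hb' : b ≠ a + b := fun h => ha (by simpa using h)
  refine ⟨{a, b, a + b}, by rw [card_insert_of_notMem ha', card_pair hb'], ?_⟩
  rw [sum_insert ha', sum_pair hb']
  calc _ = (a + a) + (b + b) := by abel
    _ = 0 := by rw [h2, h2, add_zero]

theorem exists_card_eq_sum_eq_zero_of_two_mul_le {G : Type*} [AddCommGroup G] [Fintype G]
    [DecidableEq G] (h2 : ∀ x : G, x + x = 0) {r : ℕ} (hr : 2 * r ≤ Fintype.card G)
    (hr2 : r ≠ 2) : ∃ R : Finset G, #R = r ∧ ∑ x ∈ R, x = 0 := by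
  obtain rfl | rfl | hr3 : r = 0 ∨ r = 1 ∨ 3 ≤ r := by omega
  · exact ⟨∅, card_empty, sum_empty⟩
  · exact ⟨{0}, card_singleton 0, sum_singleton id 0⟩
  induction r, hr3 using Nat.le_induction with
  | base => exact exists_card_eq_three_sum_eq_zero h2 (by omega)
  | succ r hr3 ih =>
    obtain ⟨R, hR, hsum⟩ := ih (by omega) (by omega)
    obtain ⟨T, hT, hTsum⟩ := exists_card_eq_succ_sum_eq h2 (S := R) (by omega) (by omega)
    exact ⟨T, by omega, hTsum.trans hsum⟩

theorem sum_univ_eq_zero_of_add_self {G : Type*} [AddCommGroup G] [Fintype G]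
    (h2 : ∀ x : G, x + x = 0) (hG : Fintype.card G ≠ 2) : ∑ x : G, x = 0 := by
  let : Module (ZMod 2) G :=
    AddCommGroup.zmodModule fun x => by rw [two_nsmul]; exact h2 x
  set n := Module.finrank (ZMod 2) G
  have hcard : Fintype.card G = 2 ^ n := by
    rw [Module.card_eq_pow_finrank (K := ZMod 2), ZMod.card]
  obtain hn | hn : n = 0 ∨ 2 ≤ n := by
    rcases n with _ | _ | n <;> simp_all
  · have : Subsingleton G := Fintype.card_le_one_iff_subsingleton.1 (by simp [hcard, hn])
    exact Subsingleton.elim _ _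
  · let : Fintype (GaloisField 2 n) := Fintype.ofFinite _
    let e : G ≃ₗ[ZMod 2] GaloisField 2 n :=
      LinearEquiv.ofFinrankEq _ _ (GaloisField.finrank 2 (by omega)).symm
    have hK : 2 < Fintype.card (GaloisField 2 n) := by
      rw [Fintype.card_eq_nat_card, GaloisField.card 2 n (by omega)]
      calc 2 < 2 ^ 2 := by norm_num
        _ ≤ 2 ^ n := Nat.pow_le_pow_right two_pos hn
    calc ∑ x : G, x = e.symm (∑ y, y) := by
          rw [map_sum]; exact (e.symm.toEquiv.sum_comp id).symm
      _ = 0 := by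
          simpa using congrArg e.symm
            (FiniteField.sum_pow_lt_card_sub_one (K := GaloisField 2 n) 1 (by omega))

theorem exists_card_eq_sum_eq_zero {G : Type*} [AddCommGroup G] [Fintype G]
    [DecidableEq G] (h2 : ∀ x : G, x + x = 0) {r : ℕ} (hr : r ≤ Fintype.card G)
    (hr2 : r ≠ 2) (hr2' : r ≠ Fintype.card G - 2) :
    ∃ R : Finset G, #R = r ∧ ∑ x ∈ R, x = 0 := by
  obtain hle | hlt := le_or_gt (2 * r) (Fintype.card G)
  · exact exists_card_eq_sum_eq_zero_of_two_mul_le h2 hle hr2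
  obtain ⟨R, hR, hsum⟩ :=
    exists_card_eq_sum_eq_zero_of_two_mul_le h2 (r := Fintype.card G - r) (by omega) (by omega)
  have huniv : ∑ x : G, x = 0 := sum_univ_eq_zero_of_add_self h2 (by omega)
  refine ⟨Rᶜ, by rw [card_compl, hR]; omega, ?_⟩
  rwa [← sum_compl_add_sum R, hsum, add_zero] at huniv

theorem stmt0_general (G : Type*) [AddCommGroup G] [Fintype G]
    (h2 : ∀ x : G, x + x = 0) (k : ℕ)
    (hcard : Fintype.card G = 2 ^ k)
    (r : ℕ) (hr : r ≤ 2 ^ k) (hr2 : r ≠ 2) (hr2' : r ≠ 2 ^ k - 2) :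
    ∃ R : Finset G, R.card = r ∧ ∑ i ∈ R, i = 0 := by
  classical
  rw [← hcard] at hr hr2'
  exact exists_card_eq_sum_eq_zero h2 hr hr2 hr2'

/-- In an elementary abelian 2-group `G` of order `2^k`, `k ≥ 2`,
for every `r ≤ 2^k` with `r ∉ {2, 2^k - 2}` there is a subset `R ⊆ G` of
cardinality `r` summing to `0`. -/
theorem stmt0 (G : Type*) [AddCommGroup G] [Fintype G]
    (h2 : ∀ x : G, x + x = 0) (k : ℕ) (hk : 2 ≤ k)
    (hcard : Fintype.card G = 2 ^ k)
    (r : ℕ) (hr : r ≤ 2 ^ k) (hr2 : r ≠ 2) (hr2' : r ≠ 2 ^ k - 2) :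
    ∃ R : Finset G, R.card = r ∧ ∑ i ∈ R, i = 0 :=
  stmt0_general G h2 k hcard r hr hr2 hr2'
end

section
/- Let q ≥ 2 and let A ≅ (Z/2)^q be the elementary abelian 2-group of order 2^q. Then there is no edge labelling f : E(K_{2^q−2}) → A of the complete graph on 2^q − 2 vertices such that the weighted degrees w(v) = ∑_{e ∋ v} f(e) give a proper vertex colouring (i.e. adjacent vertices receive distinct weighted degrees). -/
/-- The weighted degree of a vertex: the sum of the labels of incident edges. -/
def weightedDeg {V : Type*} [Fintype V] [DecidableEq V] (Γ : SimpleGraph V)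
    [DecidableRel Γ.Adj] {A : Type*} [AddCommMonoid A]
    (f : Sym2 V → A) (v : V) : A :=
  ∑ e ∈ Γ.edgeFinset.filter (fun e => v ∈ e), f e

/-- The sum of all vectors in `(Fin n → ZMod 2)` with `n ≥ 2` is zero. -/
lemma sum_pi_zmod2 (n : ℕ) (hn : 2 ≤ n) :
    ∑ w : Fin n → ZMod 2, w = 0 := by
  funext i
  rw [Finset.sum_apply]
  have : Nontrivial (Fin n) := Fin.nontrivial_iff_two_le.mpr hn
  obtain ⟨j, hj⟩ : ∃ j : Fin n, j ≠ i := exists_ne i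
  refine Finset.sum_ninvolution (fun w => Function.update w j (w j + 1)) ?_ ?_ ?_ ?_
  · intro w
    show w i + Function.update w j (w j + 1) i = 0
    rw [Function.update_of_ne (Ne.symm hj)]
    exact CharTwo.add_self_eq_zero _
  · intro w _ h
    have := congrFun h j
    simp at this
  · intro w; exact Finset.mem_univ _
  · intro w
    funext k
    by_cases hk : k = j
    · subst hk; simp [add_assoc, show (1:ZMod 2)+1 = 0 from rfl]
    · simp [Function.update_of_ne hk]

/-- The sum of all elements of an elementary abelian 2-group of order `2^q`, `q ≥ 2`,
is zero. -/
lemma sum_univ_eq_zero_of_elem2 (q : ℕ) (hq : 2 ≤ q) (A : Type*) [AddCommGroup A] [Fintype A]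
    (hcard : Fintype.card A = 2 ^ q) (h2 : ∀ x : A, x + x = 0) :
    ∑ x : A, x = 0 := by
  letI : Module (ZMod 2) A := AddCommGroup.zmodModule (by
    intro x; rw [two_nsmul]; exact h2 x)
  have hdim : Fintype.card A = 2 ^ Module.finrank (ZMod 2) A := by
    have := Module.card_eq_pow_finrank (K := ZMod 2) (V := A)
    rwa [ZMod.card] at this
  have hr : 2 ≤ Module.finrank (ZMod 2) A := by
    have : Module.finrank (ZMod 2) A = q :=
      Nat.pow_right_injective le_rfl (by simp only []; rw [← hdim, hcard])
    omega
  let b := Module.finBasis (ZMod 2) A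
  let e := b.equivFun
  have h1 : e (∑ x : A, x) = ∑ w : Fin (Module.finrank (ZMod 2) A) → ZMod 2, w := by
    rw [map_sum]
    exact Fintype.sum_bijective e.toEquiv e.toEquiv.bijective _ _ (fun x => rfl)
  rw [sum_pi_zmod2 _ hr] at h1
  exact e.map_eq_zero_iff.mp h1

/-- A non-diagonal `Sym2` element has exactly two members. -/
lemma card_mem_filter {V : Type*} [Fintype V] [DecidableEq V]
    (e : Sym2 V) (he : ¬ e.IsDiag) :
    (Finset.univ.filter (fun v => v ∈ e)).card = 2 := by
  induction e with
  | _ a b =>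
    have hab : a ≠ b := by simpa using he
    have : (Finset.univ.filter (fun v => v ∈ s(a, b))) = {a, b} := by
      ext v; simp [Sym2.mem_iff]
    rw [this, Finset.card_insert_of_notMem (by simpa using hab), Finset.card_singleton]

/-- The sum of all weighted degrees vanishes in a group of exponent 2,
since each edge is counted twice. -/
lemma sum_weightedDeg_top {n : ℕ} {A : Type*} [AddCommGroup A]
    (h2 : ∀ x : A, x + x = 0) (f : Sym2 (Fin n) → A) :
    ∑ v : Fin n, weightedDeg (⊤ : SimpleGraph (Fin n)) f v = 0 := by
  unfold weightedDeg
  simp only [Finset.sum_filter]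
  rw [Finset.sum_comm]
  refine Finset.sum_eq_zero fun e he => ?_
  rw [← Finset.sum_filter, Finset.sum_const]
  have hd : ¬ e.IsDiag := by
    rw [SimpleGraph.mem_edgeFinset, SimpleGraph.edgeSet_top] at he
    exact he
  rw [card_mem_filter e hd, two_nsmul, h2]

/-- If `A` is the elementary abelian 2-group of order `2^q`,
`q ≥ 2`, then the complete graph on `2^q - 2` vertices admits no edge labelling
with values in `A` whose weighted degrees give a proper vertex colouring
(all weighted degrees pairwise distinct). -/
theorem stmt9 (q : ℕ) (hq : 2 ≤ q) (A : Type*) [AddCommGroup A] [Fintype A]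
    (hcard : Fintype.card A = 2 ^ q) (h2 : ∀ x : A, x + x = 0) :
    ¬ ∃ f : Sym2 (Fin (2 ^ q - 2)) → A,
        ∀ u v : Fin (2 ^ q - 2), u ≠ v →
          weightedDeg (⊤ : SimpleGraph (Fin (2 ^ q - 2))) f u ≠
          weightedDeg (⊤ : SimpleGraph (Fin (2 ^ q - 2))) f v := by
  classical
  rintro ⟨f, hf⟩
  set w := weightedDeg (⊤ : SimpleGraph (Fin (2 ^ q - 2))) f with hw
  have hinj : Function.Injective w := by
    intro u v h
    by_contra hne
    exact hf u v hne h
  have hpow : 4 ≤ 2 ^ q := by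
    calc (4 : ℕ) = 2 ^ 2 := rfl
    _ ≤ 2 ^ q := Nat.pow_le_pow_right (by norm_num) hq
  set S := Finset.image w Finset.univ with hS
  have hcardS : S.card = 2 ^ q - 2 := by
    rw [hS, Finset.card_image_of_injective _ hinj, Finset.card_univ, Fintype.card_fin]
  set T := (Finset.univ : Finset A) \ S with hT
  have hcardT : T.card = 2 := by
    rw [hT, Finset.card_sdiff_of_subset (Finset.subset_univ _), Finset.card_univ, hcard, hcardS]
    omega
  have hsumS : ∑ x ∈ S, x = 0 := by
    rw [hS, Finset.sum_image (fun u _ v _ h => hinj h)]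
    exact sum_weightedDeg_top h2 f
  have hsumA : ∑ x ∈ (Finset.univ : Finset A), x = 0 :=
    sum_univ_eq_zero_of_elem2 q hq A hcard h2
  have hsumT : ∑ x ∈ T, x = 0 := by
    have := Finset.sum_sdiff (f := id) (Finset.subset_univ S)
    simp only [id] at this
    rw [← hT] at this
    rw [hsumS, add_zero] at this
    rw [this, hsumA]
  obtain ⟨a, b, hab, hTab⟩ := Finset.card_eq_two.mp hcardT
  rw [hTab, Finset.sum_pair hab] at hsumT
  exact hab (add_left_cancel (hsumT.trans (h2 a).symm)).symm
end

section
/- Let Γ be a finite simple graph with chromatic number χ = 4k+2 (k ≥ 0) such that in every proper χ-colouring of Γ all colour classes have odd size. Then for every abelian group A of order χ, there is no edge labelling f : E(Γ) → A whose weighted degrees w(v) = ∑_{e ∋ v} f(e) form a proper vertex colouring in which, additionally, each colour class of the induced colouring is exactly a colour class of a proper χ-colouring (i.e. the weighted degrees take exactly χ distinct values, constant on each colour class). -/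
open Finset

lemma sum_univ_group_two_mod_four {A : Type*} [AddCommGroup A] [Fintype A] [DecidableEq A]
    (k : ℕ) (hA : Fintype.card A = 4 * k + 2) :
    ∃ t : A, t ≠ 0 ∧ t + t = 0 ∧ ∑ a : A, a = t := by
  haveI : Fact (Nat.Prime 2) := ⟨Nat.prime_two⟩
  obtain ⟨t, ht⟩ := exists_prime_addOrderOf_dvd_card (G := A) 2 (by rw [hA]; omega)
  have ht2 : t + t = 0 := by
    have := addOrderOf_nsmul_eq_zero t
    rwa [ht, two_nsmul] at this
  have ht0 : t ≠ 0 := by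
    intro h; rw [h, addOrderOf_zero] at ht; omega
  refine ⟨t, ht0, ht2, ?_⟩
  set H : AddSubgroup A :=
    { carrier := {x | x + x = 0}
      zero_mem' := by simp
      add_mem' := by
        intro a b ha hb
        simp only [Set.mem_setOf_eq] at *
        rw [add_add_add_comm, ha, hb, add_zero]
      neg_mem' := by
        intro a ha
        simp only [Set.mem_setOf_eq] at *
        rw [← neg_add, ha, neg_zero] } with hH
  have hmem : ∀ x : A, x ∈ H ↔ x + x = 0 := fun x => Iff.rfl
  haveI : DecidablePred (· ∈ H) := fun x => decidable_of_iff (x + x = 0) (hmem x).symm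
  have hcardle : Nat.card H ∣ 4 * k + 2 := by
    rw [← hA, ← Nat.card_eq_fintype_card]
    exact AddSubgroup.card_addSubgroup_dvd_card H
  have hpf : ∀ {d : ℕ}, Nat.Prime d → d ∣ Nat.card H → d = 2 := by
    intro d hd hdvd
    haveI : Fact (Nat.Prime d) := ⟨hd⟩
    rw [Nat.card_eq_fintype_card] at hdvd
    obtain ⟨x, hx⟩ := exists_prime_addOrderOf_dvd_card (G := H) d hdvd
    have hxx : x + x = 0 := by
      apply Subtype.ext
      have := x.2
      rw [hmem] at this
      simpa using this
    have : addOrderOf x ∣ 2 := addOrderOf_dvd_of_nsmul_eq_zero (by rw [two_nsmul]; exact hxx)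
    rw [hx] at this
    exact (Nat.prime_dvd_prime_iff_eq hd Nat.prime_two).mp this
  have hpow := Nat.eq_prime_pow_of_unique_prime_dvd (Nat.card_pos (α := H)).ne' hpf
  set r := (Nat.card H).primeFactorsList.length with hr
  have hrle : r ≤ 1 := by
    by_contra hle
    have h4 : (2:ℕ) ^ 2 ∣ 2 ^ r := pow_dvd_pow 2 (by omega)
    rw [← hpow] at h4
    have := h4.trans hcardle
    norm_num at this
    omega
  have hne1 : Nat.card H ≠ 1 := by
    intro h1
    have hbot : H = ⊥ := AddSubgroup.eq_bot_of_card_eq H (by simpa using h1)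
    have : t ∈ H := by rw [hmem]; exact ht2
    rw [hbot, AddSubgroup.mem_bot] at this
    exact ht0 this
  have hcard2 : Nat.card H = 2 := by
    interval_cases r
    · exact absurd (by simpa using hpow) hne1
    · simpa using hpow
  set T : Finset A := univ.filter (fun x => x + x = 0) with hT
  have hcardT : T.card = 2 := by
    have h1 : Nat.card H = Nat.card {x : A // x + x = 0} :=
      Nat.card_congr (Equiv.subtypeEquivRight fun x => hmem x)
    rw [h1, Nat.card_eq_fintype_card, Fintype.card_subtype] at hcard2
    exact hcard2
  have hTeq : T = {0, t} := by
    symm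
    apply Finset.eq_of_subset_of_card_le
    · intro x hx
      simp only [Finset.mem_insert, Finset.mem_singleton] at hx
      rcases hx with rfl | rfl <;> simp [hT, ht2]
    · rw [hcardT, Finset.card_insert_of_notMem (by simpa using Ne.symm ht0),
        Finset.card_singleton]
  have hsplit := Finset.sum_filter_add_sum_filter_not (univ : Finset A)
    (fun x => x + x = 0) (fun x => x)
  have hzero : ∑ x ∈ univ.filter (fun x : A => ¬ (x + x = 0)), x = 0 := by
    refine Finset.sum_involution (fun a _ => -a) ?_ ?_ ?_ ?_
    · intro a _; exact add_neg_cancel a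
    · intro a ha _ h
      simp only [Finset.mem_filter, Finset.mem_univ, true_and] at ha
      apply ha
      nth_rewrite 1 [← h]
      exact neg_add_cancel a
    · intro a ha
      simp only [Finset.mem_filter, Finset.mem_univ, true_and] at ha ⊢
      intro h
      apply ha
      have := congrArg Neg.neg h
      simpa [neg_add] using this
    · intro a _; exact neg_neg a
  rw [hzero, add_zero, ← hT, hTeq, Finset.sum_pair (Ne.symm ht0), zero_add] at hsplit
  exact hsplit.symm

lemma card_filter_mem_sym2 {V : Type*} [Fintype V] [DecidableEq V] {e : Sym2 V}
    (he : ¬ e.IsDiag) : (Finset.univ.filter (fun v : V => v ∈ e)).card = 2 := by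
  induction e using Sym2.ind with
  | _ a b =>
    rw [Sym2.mk_isDiag_iff] at he
    have h : Finset.univ.filter (fun v : V => v ∈ (s(a, b) : Sym2 V)) = {a, b} := by
      ext v
      simp [Sym2.mem_iff]
    rw [h, Finset.card_pair he]

lemma sum_weightedDeg {V : Type*} [Fintype V] [DecidableEq V] (Γ : SimpleGraph V)
    [DecidableRel Γ.Adj] {A : Type*} [AddCommMonoid A] (f : Sym2 V → A) :
    ∑ v : V, weightedDeg Γ f v = 2 • ∑ e ∈ Γ.edgeFinset, f e := by
  unfold weightedDeg
  calc ∑ v : V, ∑ e ∈ Γ.edgeFinset.filter (fun e => v ∈ e), f e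
      = ∑ v : V, ∑ e ∈ Γ.edgeFinset, if v ∈ e then f e else 0 := by
        simp [Finset.sum_filter]
    _ = ∑ e ∈ Γ.edgeFinset, ∑ v : V, if v ∈ e then f e else 0 := Finset.sum_comm
    _ = ∑ e ∈ Γ.edgeFinset, 2 • f e := by
        apply Finset.sum_congr rfl
        intro e he
        rw [← Finset.sum_filter, Finset.sum_const,
          card_filter_mem_sym2 (SimpleGraph.not_isDiag_of_mem_edgeFinset he)]
    _ = 2 • ∑ e ∈ Γ.edgeFinset, f e := (Finset.smul_sum).symm


/-- Let `Γ` have chromatic number `4k+2` and suppose that in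
every proper `(4k+2)`-colouring of `Γ` all colour classes are odd. Then for
every abelian group `A` of order `4k+2` there is no edge labelling whose
weighted degrees properly colour the vertices while taking exactly `4k+2`
distinct values. -/
theorem stmt11 {V : Type*} [Fintype V] [DecidableEq V] (Γ : SimpleGraph V)
    [DecidableRel Γ.Adj] (k : ℕ)
    (hχ : Γ.chromaticNumber = (4 * k + 2 : ℕ))
    (hodd : ∀ C : V → Fin (4 * k + 2),
      (∀ u v : V, Γ.Adj u v → C u ≠ C v) →
      ∀ c : Fin (4 * k + 2),
        Odd ((Finset.univ.filter (fun v : V => C v = c)).card))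
    (A : Type*) [AddCommGroup A] [Fintype A] [DecidableEq A]
    (hA : Fintype.card A = 4 * k + 2) :
    ¬ ∃ f : Sym2 V → A,
        (∀ u v : V, Γ.Adj u v → weightedDeg Γ f u ≠ weightedDeg Γ f v) ∧
        (Finset.univ.image (weightedDeg Γ f)).card = 4 * k + 2 := by
  rintro ⟨f, hf, -⟩
  set w := weightedDeg Γ f with hw
  have heq : A ≃ Fin (4 * k + 2) := Fintype.equivFinOfCardEq hA
  -- every fiber of w is odd
  have hfib : ∀ a : A, Odd ((Finset.univ.filter (fun v : V => w v = a)).card) := by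
    intro a
    have hC := hodd (fun v => heq (w v))
      (fun u v huv h => hf u v huv (heq.injective h)) (heq a)
    have hset : (Finset.univ.filter (fun v : V => heq (w v) = heq a)) =
        (Finset.univ.filter (fun v : V => w v = a)) := by
      ext v; simp [heq.apply_eq_iff_eq]
    rwa [hset] at hC
  -- handshake
  have hsum1 : ∑ v : V, w v = 2 • ∑ e ∈ Γ.edgeFinset, f e := sum_weightedDeg Γ f
  -- fiberwise sum
  have hsum2 : ∑ v : V, w v =
      ∑ a : A, ((Finset.univ.filter (fun v : V => w v = a)).card) • a := by
    rw [← Finset.sum_fiberwise_of_maps_to (g := w) (t := (Finset.univ : Finset A))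
      (fun v _ => Finset.mem_univ (w v)) w]
    apply Finset.sum_congr rfl
    intro a _
    rw [Finset.sum_congr rfl (fun v hv => (Finset.mem_filter.mp hv).2),
      Finset.sum_const]
  -- decompose odd multiples
  have hdec : ∑ a : A, ((Finset.univ.filter (fun v : V => w v = a)).card) • a =
      (∑ a : A, a) +
        2 • ∑ a : A, (((Finset.univ.filter (fun v : V => w v = a)).card) / 2) • a := by
    have key : ∀ (n : ℕ), n % 2 = 1 → ∀ a : A, n • a = a + 2 • ((n / 2) • a) := by
      intro n hn a
      have h : n = 1 + 2 * (n / 2) := by omega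
      calc n • a = (1 + 2 * (n / 2)) • a := by rw [← h]
        _ = a + 2 • ((n / 2) • a) := by rw [add_nsmul, one_nsmul, mul_comm, mul_nsmul]
    rw [Finset.smul_sum, ← Finset.sum_add_distrib]
    exact Finset.sum_congr rfl fun a _ => key _ (Nat.odd_iff.mp (hfib a)) a
  -- the sum of all elements of A
  obtain ⟨t, ht0, ht2, htsum⟩ := sum_univ_group_two_mod_four k hA
  set E := ∑ e ∈ Γ.edgeFinset, f e with hE
  set M := ∑ a : A, (((Finset.univ.filter (fun v : V => w v = a)).card) / 2) • a with hM
  have hcomb : 2 • E = t + 2 • M := by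
    rw [← hsum1, hsum2, hdec, htsum]
  set y := E - M with hy
  have hyy : y + y = t := by
    have : 2 • y = 2 • E - 2 • M := by rw [smul_sub]
    rw [two_nsmul] at this
    rw [this, hcomb]
    abel
  have h4 : (4 : ℕ) • y = 0 := by
    have : (4 : ℕ) • y = (y + y) + (y + y) := by
      rw [show (4 : ℕ) = 2 * 2 from rfl, mul_nsmul, two_nsmul, two_nsmul]
    rw [this, hyy, ht2]
  have hd4 : addOrderOf y ∣ 4 := addOrderOf_dvd_of_nsmul_eq_zero h4
  have hdcard : addOrderOf y ∣ 4 * k + 2 := by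
    rw [← hA]; exact addOrderOf_dvd_card
  have hgcd : Nat.gcd 4 (4 * k + 2) = 2 := by
    rw [show (4 * k + 2 : ℕ) = 2 * (2 * k + 1) by ring, show (4 : ℕ) = 2 * 2 by norm_num,
      Nat.gcd_mul_left]
    have h1 : Nat.gcd 2 (2 * k + 1) = 1 := by
      rw [Nat.gcd_rec, show (2 * k + 1) % 2 = 1 by omega, Nat.gcd_rec]
      simp
    rw [h1]
  have hd2 : addOrderOf y ∣ 2 := by
    have := Nat.dvd_gcd hd4 hdcard
    rwa [hgcd] at this
  have : y + y = 0 := by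
    have := addOrderOf_dvd_iff_nsmul_eq_zero.mp hd2
    rwa [two_nsmul] at this
  rw [this] at hyy
  exact ht0 hyy.symm
end

section
/- Every connected bipartite simple graph Γ of order n ≥ 3 with at least one even bipartition class admits an edge labelling f : E(Γ) → Z/2 such that the weighted degrees w(v) = ∑_{e ∋ v} f(e) form a proper vertex colouring (adjacent vertices get distinct weighted degrees). -/
lemma wd_add {V : Type*} [Fintype V] [DecidableEq V] (Γ : SimpleGraph V)
    [DecidableRel Γ.Adj] (f g : Sym2 V → ZMod 2) (v : V) :
    weightedDeg Γ (fun e => f e + g e) v = weightedDeg Γ f v + weightedDeg Γ g v := by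
  unfold weightedDeg; exact Finset.sum_add_distrib

lemma wd_single {V : Type*} [Fintype V] [DecidableEq V] (Γ : SimpleGraph V)
    [DecidableRel Γ.Adj] {a b : V} (hab : Γ.Adj a b) (v : V) :
    weightedDeg Γ (fun e => if e = s(a, b) then (1 : ZMod 2) else 0) v
      = (if v = a then 1 else 0) + (if v = b then 1 else 0) := by
  unfold weightedDeg
  rw [Finset.sum_ite_eq' (Γ.edgeFinset.filter (fun e => v ∈ e)) s(a, b) (fun _ => (1 : ZMod 2))]
  have hne := hab.ne
  by_cases h1 : v = a <;> by_cases h2 : v = b <;>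
    simp [h1, h2, Finset.mem_filter, SimpleGraph.mem_edgeFinset, hab] <;>
    first
      | (exfalso; exact hne (h1 ▸ h2 ▸ rfl))
      | tauto

lemma wd_walk {V : Type*} [Fintype V] [DecidableEq V] (Γ : SimpleGraph V)
    [DecidableRel Γ.Adj] {a b : V} (p : Γ.Walk a b) (v : V) :
    weightedDeg Γ (fun e => (p.edges.count e : ZMod 2)) v
      = (if v = a then 1 else 0) + (if v = b then 1 else 0) := by
  induction p with
  | nil =>
    simp only [weightedDeg, SimpleGraph.Walk.edges_nil, List.count_nil, Nat.cast_zero,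
      Finset.sum_const_zero]
    split_ifs <;> decide
  | @cons a c b hadj q ih =>
    have hfun : (fun e => (((SimpleGraph.Walk.cons hadj q).edges.count e : ℕ) : ZMod 2))
        = fun e => (if e = s(a, c) then (1 : ZMod 2) else 0) + ((q.edges.count e : ℕ) : ZMod 2) := by
      funext e
      simp only [SimpleGraph.Walk.edges_cons, List.count_cons]
      push_cast
      by_cases h : e = s(a, c)
      · simp [h, add_comm]
      · simp [h, Ne.symm h]
    rw [hfun, wd_add, wd_single Γ hadj, ih]
    have key : ∀ x y z : ZMod 2, (x + z) + (z + y) = x + y := by decide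
    exact key _ _ _

/-- A connected bipartite graph of order at least 3 with at least
one even bipartition class admits a `Z/2`-edge-labelling whose weighted degrees
properly colour the vertices. -/
theorem stmt13 {V : Type*} [Fintype V] [DecidableEq V] (Γ : SimpleGraph V)
    [DecidableRel Γ.Adj] (hconn : Γ.Connected) (hn : 3 ≤ Fintype.card V)
    (V₁ V₂ : Finset V) (hdisj : Disjoint V₁ V₂) (hcover : V₁ ∪ V₂ = Finset.univ)
    (hbip : ∀ u v : V, Γ.Adj u v → (u ∈ V₁ ↔ v ∈ V₂))
    (heven : Even V₁.card ∨ Even V₂.card) :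
    ∃ f : Sym2 V → ZMod 2,
      ∀ u v : V, Γ.Adj u v → weightedDeg Γ f u ≠ weightedDeg Γ f v := by
  classical
  have hnV : Nonempty V := by
    have : 0 < Fintype.card V := by omega
    exact Fintype.card_pos_iff.mp this
  obtain ⟨r⟩ := hnV
  have key : ∀ v : V, v ∈ V₂ ↔ v ∉ V₁ := by
    intro v
    constructor
    · intro h2 h1; exact (Finset.disjoint_left.mp hdisj h1) h2
    · intro h1
      have hv : v ∈ V₁ ∪ V₂ := by rw [hcover]; exact Finset.mem_univ v
      rcases Finset.mem_union.mp hv with h | h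
      · exact absurd h h1
      · exact h
  obtain ⟨W, hWev, hWadj⟩ :
      ∃ W : Finset V, Even W.card ∧ ∀ u v : V, Γ.Adj u v → (u ∈ W ↔ v ∉ W) := by
    rcases heven with h | h
    · refine ⟨V₁, h, fun u v huv => ?_⟩
      have h1 := hbip u v huv
      have h2 := key v
      tauto
    · refine ⟨V₂, h, fun u v huv => ?_⟩
      have h1 := hbip u v huv
      have h2 := key u
      tauto
  have hwalk : ∀ v : V, Γ.Walk r v := fun v => (hconn.preconnected r v).some
  set F : V → Sym2 V → ZMod 2 := fun v e => ((hwalk v).edges.count e : ZMod 2) with hF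
  refine ⟨fun e => ∑ v ∈ W, F v e, ?_⟩
  have hwd : ∀ u : V, weightedDeg Γ (fun e => ∑ v ∈ W, F v e) u
      = (if u ∈ W then 1 else 0) := by
    intro u
    have hswap : weightedDeg Γ (fun e => ∑ v ∈ W, F v e) u
        = ∑ v ∈ W, weightedDeg Γ (F v) u := by
      unfold weightedDeg; rw [Finset.sum_comm]
    rw [hswap]
    have hterm : ∀ v ∈ W, weightedDeg Γ (F v) u
        = (if u = r then 1 else 0) + (if u = v then 1 else 0) := by
      intro v _
      exact wd_walk Γ (hwalk v) u
    rw [Finset.sum_congr rfl hterm, Finset.sum_add_distrib, Finset.sum_const,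
      Finset.sum_ite_eq W u (fun _ => (1 : ZMod 2))]
    obtain ⟨k, hk⟩ := hWev
    have hzero : (W.card : ZMod 2) = 0 := by
      rw [hk]; push_cast
      exact CharTwo.add_self_eq_zero _
    have hs : (W.card : ℕ) • (if u = r then (1 : ZMod 2) else 0)
        = (W.card : ZMod 2) * (if u = r then 1 else 0) := by
      simp [nsmul_eq_mul]
    rw [hs, hzero, zero_mul, zero_add]
  intro u v huv
  rw [hwd u, hwd v]
  have h := (hWadj u v huv)
  by_cases hu : u ∈ W
  · have hv : v ∉ W := h.mp hu
    simp [hu, hv]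
  · have hv : v ∈ W := by tauto
    simp [hu, hv]
end

section
/- Let Γ be a connected bipartite simple graph of order ≥ 3 whose both bipartition classes have odd size. Then there is no edge labelling f : E(Γ) → Z/2 such that the weighted degrees w(v) = ∑_{e ∋ v} f(e) properly colour the vertices (i.e. w is constant 1 on one part and 0 on the other is the only possible pattern, and it is impossible). -/
open Finset

theorem ZMod.add_eq_add_of_ne_of_ne {a b c d : ZMod 2} (hab : a ≠ b) (hcd : c ≠ d) :
    a + c = b + d := by
  revert a b c d
  decide

namespace SimpleGraph

variable {V : Type*}

theorem Preconnected.eq_of_forall_adj {α : Type*} {G : SimpleGraph V} (hG : G.Preconnected)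
    {f : V → α} (hf : ∀ u v, G.Adj u v → f u = f v) (u v : V) : f u = f v := by
  obtain ⟨p⟩ := hG u v
  induction p with
  | nil => rfl
  | cons h _ ih => exact (hf _ _ h).trans ih

theorem Preconnected.add_eq_add_of_zmod_two {G : SimpleGraph V} (hG : G.Preconnected)
    {c d : V → ZMod 2} (hc : ∀ u v, G.Adj u v → c u ≠ c v) (hd : ∀ u v, G.Adj u v → d u ≠ d v)
    (u v : V) : c u + d u = c v + d v :=
  hG.eq_of_forall_adj (fun u v h => ZMod.add_eq_add_of_ne_of_ne (hc u v h) (hd u v h)) u v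

theorem sum_weightedDeg_eq_two_nsmul [Fintype V] [DecidableEq V] (G : SimpleGraph V)
    [DecidableRel G.Adj] {A : Type*} [AddCommMonoid A] (f : Sym2 V → A) :
    ∑ v, weightedDeg G f v = 2 • ∑ e ∈ G.edgeFinset, f e := by
  simp only [weightedDeg, sum_filter]
  rw [sum_comm, smul_sum]
  refine sum_congr rfl fun e he => ?_
  have hcard : #(univ.filter (· ∈ e)) = 2 := by
    rw [← e.card_toFinset_of_not_isDiag (G.not_isDiag_of_mem_edgeSet (mem_edgeFinset.mp he))]
    congr 1
    ext v
    simp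
  rw [← sum_filter, sum_const, hcard]

end SimpleGraph

theorem stmt14_general {V : Type*} [Fintype V] [DecidableEq V] (Γ : SimpleGraph V)
    [DecidableRel Γ.Adj] (hconn : Γ.Connected)
    (V₁ V₂ : Finset V) (hdisj : Disjoint V₁ V₂) (hcover : V₁ ∪ V₂ = Finset.univ)
    (hbip : ∀ u v : V, Γ.Adj u v → (u ∈ V₁ ↔ v ∈ V₂))
    (hodd : Odd V₁.card ∧ Odd V₂.card) :
    ¬ ∃ f : Sym2 V → ZMod 2,
      ∀ u v : V, Γ.Adj u v → weightedDeg Γ f u ≠ weightedDeg Γ f v := by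
  rintro ⟨f, hf⟩
  let side : V → ZMod 2 := fun v => if v ∈ V₁ then 1 else 0
  have hV₂ : ∀ v, v ∈ V₂ ↔ v ∉ V₁ := fun v =>
    ⟨fun h₂ h₁ => disjoint_left.mp hdisj h₁ h₂,
      fun h₁ => (mem_union.mp (hcover ▸ mem_univ v)).resolve_left h₁⟩
  have hside : ∀ u v, Γ.Adj u v → side u ≠ side v := fun u v huv => by
    have := hbip u v huv
    by_cases hu : u ∈ V₁ <;> simp_all [side]
  obtain ⟨v₀, -⟩ := card_pos.mp hodd.1.pos
  have heven : Even (Fintype.card V) := by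
    rw [← card_univ, ← hcover, card_union_of_disjoint hdisj]
    exact hodd.1.add_odd hodd.2
  have hdeg : ∑ v, weightedDeg Γ f v = 0 := by
    rw [Γ.sum_weightedDeg_eq_two_nsmul, two_nsmul, ZModModule.add_self]
  have hsides : ∑ v, side v = 1 := by
    rw [sum_ite_mem, univ_inter, sum_const, nsmul_one, ZMod.natCast_eq_one_iff_odd]
    exact hodd.1
  have htotal : ∑ v, (weightedDeg Γ f v + side v) = 0 := by
    rw [sum_congr rfl fun v _ => hconn.preconnected.add_eq_add_of_zmod_two hf hside v v₀,
      sum_const, card_univ, nsmul_eq_mul, heven.natCast_zmod_two, zero_mul]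
  rw [sum_add_distrib, hdeg, hsides, zero_add] at htotal
  exact one_ne_zero htotal

/-- A connected bipartite graph of order at least 3 whose two
bipartition classes both have odd size admits no `Z/2`-edge-labelling whose
weighted degrees properly colour the vertices. -/
theorem stmt14 {V : Type*} [Fintype V] [DecidableEq V] (Γ : SimpleGraph V)
    [DecidableRel Γ.Adj] (hconn : Γ.Connected) (hn : 3 ≤ Fintype.card V)
    (V₁ V₂ : Finset V) (hdisj : Disjoint V₁ V₂) (hcover : V₁ ∪ V₂ = Finset.univ)
    (hbip : ∀ u v : V, Γ.Adj u v → (u ∈ V₁ ↔ v ∈ V₂))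
    (hodd : Odd V₁.card ∧ Odd V₂.card) :
    ¬ ∃ f : Sym2 V → ZMod 2,
      ∀ u v : V, Γ.Adj u v → weightedDeg Γ f u ≠ weightedDeg Γ f v :=
  stmt14_general Γ hconn V₁ V₂ hdisj hcover hbip hodd
end

section
/- Every connected bipartite simple graph Γ of order n ≥ 3 with both bipartition classes odd admits an edge labelling f : E(Γ) → Z/3 such that the weighted degrees w(v) = ∑_{e ∋ v} f(e) form a proper vertex colouring. -/
section aux
variable {V : Type*} [Fintype V] [DecidableEq V] (Γ : SimpleGraph V) [DecidableRel Γ.Adj]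

lemma weightedDeg_sum {ι : Type*} (s : Finset ι) (F : ι → Sym2 V → ZMod 3) (x : V) :
    weightedDeg Γ (fun e => ∑ i ∈ s, F i e) x = ∑ i ∈ s, weightedDeg Γ (F i) x := by
  unfold weightedDeg; rw [Finset.sum_comm]

lemma weightedDeg_add (f g : Sym2 V → ZMod 3) (x : V) :
    weightedDeg Γ (fun e => f e + g e) x = weightedDeg Γ f x + weightedDeg Γ g x := by
  unfold weightedDeg; rw [Finset.sum_add_distrib]

lemma weightedDeg_single {a b : V} (hab : Γ.Adj a b) (c : ZMod 3) (x : V) :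
    weightedDeg Γ (fun e => if e = s(a,b) then c else 0) x
      = if x = a ∨ x = b then c else 0 := by
  unfold weightedDeg
  rw [Finset.sum_ite_eq' (Γ.edgeFinset.filter (fun e => x ∈ e)) (s(a,b)) (fun _ => c)]
  simp [SimpleGraph.mem_edgeFinset, hab]

lemma walk_label {u v : V} (p : Γ.Walk u v) : ∀ c : ZMod 3,
    ∃ f : Sym2 V → ZMod 3, ∀ x : V,
      weightedDeg Γ f x = (if x = u then c else 0)
        + (if x = v then (-1 : ZMod 3)^(p.length+1) * c else 0) := by
  induction p with
  | nil =>
    intro c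
    exact ⟨fun _ => 0, fun x => by simp [weightedDeg]; split_ifs <;> ring⟩
  | @cons u y v h p ih =>
    intro c
    obtain ⟨f', hf'⟩ := ih (-c)
    refine ⟨fun e => (if e = s(u,y) then c else 0) + f' e, fun x => ?_⟩
    rw [weightedDeg_add, weightedDeg_single Γ h, hf']
    have huy : u ≠ y := h.ne
    simp only [SimpleGraph.Walk.length_cons]
    by_cases h1 : x = u <;> by_cases h2 : x = y
    · exact absurd (h1.symm.trans h2) huy
    all_goals simp only [h1, h2, if_true, if_false, pow_succ] <;>
      split_ifs <;> simp_all <;> ring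
end aux

section aux2
variable {V : Type*} [Fintype V] [DecidableEq V] (Γ : SimpleGraph V) [DecidableRel Γ.Adj]
variable (V₁ V₂ : Finset V)

lemma walk_parity (hdisj : Disjoint V₁ V₂) (hcover : V₁ ∪ V₂ = Finset.univ)
    (hbip : ∀ u v : V, Γ.Adj u v → (u ∈ V₁ ↔ v ∈ V₂)) :
    ∀ {u v : V} (p : Γ.Walk u v), ((u ∈ V₁ ↔ v ∈ V₁) ↔ Even p.length) := by
  have hmem : ∀ x : V, (x ∈ V₁ ∧ x ∉ V₂) ∨ (x ∉ V₁ ∧ x ∈ V₂) := by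
    intro x
    have h1 : x ∈ V₁ ∪ V₂ := by rw [hcover]; exact Finset.mem_univ x
    rw [Finset.mem_union] at h1
    have h2 := Finset.disjoint_left.mp hdisj
    tauto
  intro u v p
  induction p with
  | nil => simp
  | @cons u y v h p ih =>
    have h3 := hbip u y h
    have h4 := hmem u
    have h5 := hmem y
    simp only [SimpleGraph.Walk.length_cons, Nat.even_add_one]
    tauto

lemma exists_target (hdisj : Disjoint V₁ V₂) (h2 : 2 ≤ V₁.card) :
    ∃ d : V → ZMod 3, (∀ v ∈ V₂, d v = 0) ∧ (∀ v ∈ V₁, d v = 1 ∨ d v = 2) ∧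
      ∑ v ∈ V₁, d v = 0 := by
  obtain ⟨S, hSsub, hScard⟩ := Finset.exists_subset_card_eq
    (show (3 - V₁.card % 3) % 3 ≤ V₁.card by omega)
  refine ⟨fun v => (if v ∈ V₁ then 1 else 0) + (if v ∈ S then 1 else 0), ?_, ?_, ?_⟩
  · intro v hv
    have h1 : v ∉ V₁ := Finset.disjoint_right.mp hdisj hv
    have h2 : v ∉ S := fun hS => h1 (hSsub hS)
    simp [h1, h2]
  · intro v hv
    by_cases hS : v ∈ S <;> simp [hv, hS] <;> norm_num
  · rw [Finset.sum_add_distrib]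
    have e1 : ∑ v ∈ V₁, (if v ∈ V₁ then (1 : ZMod 3) else 0) = V₁.card := by
      rw [Finset.sum_ite_mem, Finset.inter_self, Finset.sum_const, nsmul_eq_mul, mul_one]
    have e2 : ∑ v ∈ V₁, (if v ∈ S then (1 : ZMod 3) else 0) = S.card := by
      rw [Finset.sum_ite_mem, Finset.inter_eq_right.mpr hSsub, Finset.sum_const,
        nsmul_eq_mul, mul_one]
    rw [e1, e2, hScard, ← Nat.cast_add, ZMod.natCast_eq_zero_iff]
    omega
end aux2

lemma main_aux {V : Type*} [Fintype V] [DecidableEq V] (Γ : SimpleGraph V)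
    [DecidableRel Γ.Adj] (hconn : Γ.Connected)
    (V₁ V₂ : Finset V) (hdisj : Disjoint V₁ V₂) (hcover : V₁ ∪ V₂ = Finset.univ)
    (hbip : ∀ u v : V, Γ.Adj u v → (u ∈ V₁ ↔ v ∈ V₂))
    (h2 : 2 ≤ V₁.card) :
    ∃ f : Sym2 V → ZMod 3,
      ∀ u v : V, Γ.Adj u v → weightedDeg Γ f u ≠ weightedDeg Γ f v := by
  classical
  obtain ⟨d, hd2, hd1, hdsum⟩ := exists_target V₁ V₂ hdisj h2
  obtain ⟨r, hr⟩ := Finset.card_pos.mp (by omega : 0 < V₁.card)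
  have hmem : ∀ x : V, (x ∈ V₁ ∧ x ∉ V₂) ∨ (x ∉ V₁ ∧ x ∈ V₂) := by
    intro x
    have h1 : x ∈ V₁ ∪ V₂ := by rw [hcover]; exact Finset.mem_univ x
    rw [Finset.mem_union] at h1
    have h2 := Finset.disjoint_left.mp hdisj
    tauto
  have key : ∀ v : V, ∃ f : Sym2 V → ZMod 3, ∀ x : V,
      weightedDeg Γ f x = (if x = r then (if v ∈ V₁ then -d v else d v) else 0)
        + (if x = v then d v else 0) := by
    intro v
    obtain ⟨p⟩ := hconn.preconnected r v
    obtain ⟨f, hf⟩ := walk_label Γ p ((-1 : ZMod 3)^(p.length+1) * d v)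
    have hsq : (-1 : ZMod 3)^(p.length+1) * ((-1 : ZMod 3)^(p.length+1) * d v) = d v := by
      rw [← mul_assoc, ← pow_add, Even.neg_one_pow ⟨p.length+1, rfl⟩, one_mul]
    have hpar := walk_parity Γ V₁ V₂ hdisj hcover hbip p
    have hsign : (-1 : ZMod 3)^(p.length+1) * d v = (if v ∈ V₁ then -d v else d v) := by
      by_cases hv : v ∈ V₁
      · have hev : Even p.length := hpar.mp (iff_of_true hr hv)
        obtain ⟨k, hk⟩ := hev
        have hodd : Odd (p.length + 1) := ⟨k, by omega⟩
        rw [if_pos hv, hodd.neg_one_pow]; ring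
      · have hodd : ¬ Even p.length := fun he => hv ((hpar.mpr he).mp hr)
        have hev : Even (p.length + 1) := by
          rw [Nat.even_add_one]; simpa using hodd
        rw [if_neg hv, hev.neg_one_pow, one_mul]
    refine ⟨f, fun x => ?_⟩
    rw [hf x, hsq, hsign]
  choose F hF using key
  set f : Sym2 V → ZMod 3 := fun e => ∑ v ∈ Finset.univ.erase r, F v e with hfdef
  have hw : ∀ x : V, weightedDeg Γ f x = d x := by
    intro x
    rw [hfdef, weightedDeg_sum]
    simp only [hF]
    rw [Finset.sum_add_distrib]
    by_cases hx : x = r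
    · subst hx
      have t2 : ∑ v ∈ Finset.univ.erase x, (if x = v then d v else 0) = 0 := by
        apply Finset.sum_eq_zero
        intro v hv
        exact if_neg (fun h => (Finset.mem_erase.mp hv).1 h.symm)
      have hg0 : ∑ v ∈ Finset.univ, (if v ∈ V₁ then -d v else d v) = 0 := by
        rw [← hcover, Finset.sum_union hdisj]
        have e1 : ∑ v ∈ V₁, (if v ∈ V₁ then -d v else d v) = 0 := by
          rw [Finset.sum_congr rfl (fun v hv => if_pos hv)]
          simp [hdsum]
        have e2 : ∑ v ∈ V₂, (if v ∈ V₁ then -d v else d v) = 0 := by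
          apply Finset.sum_eq_zero
          intro v hv
          rw [if_neg (Finset.disjoint_right.mp hdisj hv), hd2 v hv]
        rw [e1, e2, add_zero]
      have t1 : ∑ v ∈ Finset.univ.erase x,
          (if x = x then (if v ∈ V₁ then -d v else d v) else 0) = d x := by
        simp only [eq_self_iff_true, if_true]
        rw [Finset.sum_erase_eq_sub (Finset.mem_univ x), hg0, if_pos hr]
        ring
      rw [t1, t2, add_zero]
    · have t1 : ∑ v ∈ Finset.univ.erase r,
          (if x = r then (if v ∈ V₁ then -d v else d v) else 0) = 0 := by
        apply Finset.sum_eq_zero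
        intro v _
        exact if_neg hx
      have t2 : ∑ v ∈ Finset.univ.erase r, (if x = v then d v else 0) = d x := by
        rw [Finset.sum_ite_eq, if_pos (Finset.mem_erase.mpr ⟨hx, Finset.mem_univ x⟩)]
      rw [t1, t2, zero_add]
  refine ⟨f, fun u v hadj => ?_⟩
  rw [hw u, hw v]
  have hb := hbip u v hadj
  rcases hmem u with ⟨hu1, _⟩ | ⟨hu1, hu2⟩
  · have hv2 : v ∈ V₂ := hb.mp hu1
    rcases hd1 u hu1 with h | h <;> rw [h, hd2 v hv2] <;> decide
  · have hv1 : v ∈ V₁ := by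
      rcases hmem v with ⟨h, _⟩ | ⟨_, h⟩
      · exact h
      · exact absurd (hb.mpr h) hu1
    rcases hd1 v hv1 with h | h <;> rw [hd2 u hu2, h] <;> decide

/-- A connected bipartite graph of order at least 3 whose two
bipartition classes both have odd size admits a `Z/3`-edge-labelling whose
weighted degrees properly colour the vertices. -/
theorem stmt15 {V : Type*} [Fintype V] [DecidableEq V] (Γ : SimpleGraph V)
    [DecidableRel Γ.Adj] (hconn : Γ.Connected) (hn : 3 ≤ Fintype.card V)
    (V₁ V₂ : Finset V) (hdisj : Disjoint V₁ V₂) (hcover : V₁ ∪ V₂ = Finset.univ)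
    (hbip : ∀ u v : V, Γ.Adj u v → (u ∈ V₁ ↔ v ∈ V₂))
    (hodd : Odd V₁.card ∧ Odd V₂.card) :
    ∃ f : Sym2 V → ZMod 3,
      ∀ u v : V, Γ.Adj u v → weightedDeg Γ f u ≠ weightedDeg Γ f v := by
  have hcard : V₁.card + V₂.card = Fintype.card V := by
    rw [← Finset.card_union_of_disjoint hdisj, hcover, Finset.card_univ]
  by_cases h2 : 2 ≤ V₁.card
  · exact main_aux Γ hconn V₁ V₂ hdisj hcover hbip h2
  · have h2' : 2 ≤ V₂.card := by omega
    exact main_aux Γ hconn V₂ V₁ hdisj.symm (by rw [Finset.union_comm]; exact hcover)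
      (fun u v h => by
        have h1 := hbip u v h
        have h2 := hbip v u h.symm
        have hmu : u ∈ V₁ ∨ u ∈ V₂ := by
          have : u ∈ V₁ ∪ V₂ := by rw [hcover]; exact Finset.mem_univ u
          rwa [Finset.mem_union] at this
        have hmv : v ∈ V₁ ∨ v ∈ V₂ := by
          have : v ∈ V₁ ∪ V₂ := by rw [hcover]; exact Finset.mem_univ v
          rwa [Finset.mem_union] at this
        have hd : ∀ w : V, ¬(w ∈ V₁ ∧ w ∈ V₂) :=
          fun w hw => Finset.disjoint_left.mp hdisj hw.1 hw.2
        have hdu := hd u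
        have hdv := hd v
        tauto) h2'
end

section
/- Let Γ be a connected simple graph, A an abelian group, and W = (x = v₀, v₁, …, v_ℓ = y) a walk in Γ. For a ∈ A, modify an edge labelling f by adding a to f(v_{2i} v_{2i+1}) and −a to f(v_{2i+1} v_{2i+2}) along the walk (alternating signs starting with +a). Then the weighted degree w(v) = ∑_{e ∋ v} f(e) changes by a at x, by (−1)^{ℓ+1} a at y, and by 0 at every other vertex. -/
lemma stmt17_key {V : Type*} [Fintype V] [DecidableEq V] (Γ : SimpleGraph V)
    [DecidableRel Γ.Adj] {A : Type*} [AddCommGroup A] {x y : V}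
    (p : Γ.Walk x y) (v : V) (a : A) :
    ∑ i ∈ Finset.range p.length,
      ∑ e ∈ Γ.edgeFinset.filter (fun e => v ∈ e),
        (if p.edges[i]? = some e then ((-1 : ℤ) ^ i) • a else 0)
    = (if v = x then a else 0) + (if v = y then ((-1 : ℤ) ^ (p.length + 1)) • a else 0) := by
  induction p generalizing a with
  | nil =>
    simp only [SimpleGraph.Walk.length_nil, Finset.range_zero, Finset.sum_empty, zero_add,
      pow_one, neg_smul, one_smul]
    split <;> simp
  | @cons x u y h q ih =>
    rw [SimpleGraph.Walk.length_cons, Finset.sum_range_succ']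
    have h0 : ∑ e ∈ Γ.edgeFinset.filter (fun e => v ∈ e),
        (if (SimpleGraph.Walk.cons h q).edges[0]? = some e then ((-1 : ℤ) ^ 0) • a else 0)
        = (if v ∈ s(x, u) then a else 0) := by
      simp only [SimpleGraph.Walk.edges_cons, List.getElem?_cons_zero, Option.some.injEq,
        pow_zero, one_smul]
      rw [Finset.sum_ite_eq (Γ.edgeFinset.filter (fun e => v ∈ e)) s(x,u) (fun _ => a)]
      simp [Finset.mem_filter, SimpleGraph.mem_edgeFinset, h]
    have hsucc : ∀ i, ((-1 : ℤ) ^ (i + 1)) • a = ((-1 : ℤ) ^ i) • (-a) := by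
      intro i; rw [pow_succ]; simp [mul_smul]
    have hrest : ∑ i ∈ Finset.range q.length,
        ∑ e ∈ Γ.edgeFinset.filter (fun e => v ∈ e),
          (if (SimpleGraph.Walk.cons h q).edges[i + 1]? = some e then ((-1 : ℤ) ^ (i + 1)) • a else 0)
        = (if v = u then (-a) else 0) + (if v = y then ((-1 : ℤ) ^ (q.length + 1)) • (-a) else 0) := by
      rw [← ih (-a)]
      refine Finset.sum_congr rfl fun i _ => Finset.sum_congr rfl fun e _ => ?_
      simp [hsucc i]
    rw [h0, hrest]
    have hne : x ≠ u := h.ne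
    have hmem : v ∈ s(x, u) ↔ v = x ∨ v = u := by simp [Sym2.mem_iff]
    have hsign : ((-1 : ℤ) ^ (q.length + 1)) • (-a) = ((-1 : ℤ) ^ (q.length + 1 + 1)) • a := by
      rw [pow_succ _ (q.length + 1), mul_smul, neg_smul, one_smul]
    rw [← hsign]
    rcases eq_or_ne v x with hvx | hvx <;> rcases eq_or_ne v u with hvu | hvu
    · exact absurd (hvx.symm.trans hvu) hne
    · simp [Sym2.mem_iff, hvx, hvu, hne, hne.symm]; exact add_comm _ _
    · simp [Sym2.mem_iff, hvx, hvu, hne, hne.symm, add_neg_cancel_left]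
    · simp [Sym2.mem_iff, hvx, hvu]

/-- Modifying an edge labelling `f` along a walk
`x = v₀, v₁, …, v_ℓ = y` by adding `(-1)^i • a` to the label of the `i`-th edge
of the walk (accumulating over repeated edges) changes the weighted degree by
`a` at `x`, by `(-1)^{ℓ+1} • a` at `y`, and by `0` at every other vertex. -/
theorem stmt17 {V : Type*} [Fintype V] [DecidableEq V] (Γ : SimpleGraph V)
    [DecidableRel Γ.Adj] (A : Type*) [AddCommGroup A]
    (f : Sym2 V → A) (a : A) {x y : V} (hxy : x ≠ y) (p : Γ.Walk x y)
    (f' : Sym2 V → A)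
    (hf' : ∀ e : Sym2 V, f' e = f e +
      ∑ i ∈ Finset.range p.length,
        if p.edges[i]? = some e then ((-1 : ℤ) ^ i) • a else 0) :
    weightedDeg Γ f' x = weightedDeg Γ f x + a ∧
    weightedDeg Γ f' y = weightedDeg Γ f y + ((-1 : ℤ) ^ (p.length + 1)) • a ∧
    ∀ v : V, v ≠ x → v ≠ y → weightedDeg Γ f' v = weightedDeg Γ f v := by
  have main : ∀ v : V, weightedDeg Γ f' v = weightedDeg Γ f v +
      ((if v = x then a else 0) + (if v = y then ((-1 : ℤ) ^ (p.length + 1)) • a else 0)) := by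
    intro v
    unfold weightedDeg
    simp only [hf', Finset.sum_add_distrib]
    rw [Finset.sum_comm, stmt17_key Γ p v a]
  refine ⟨?_, ?_, ?_⟩
  · rw [main x]; simp [hxy]
  · rw [main y]; simp [hxy.symm]
  · intro v hvx hvy; rw [main v]; simp [hvx, hvy]
end
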